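/- arXiv:1902.04834 — 2 statements merged into one kernel-verified Lean document; each statement's English description precedes it below -/
import Mathlib

section
/- Let A_B ∈ ℝ^{m×n₂} with m ≤ n₂, let Θ_B ∈ ℝ^{n₂×n₂} be diagonal with strictly positive diagonal entries, and let D* ∈ ℝ^{m×m} be diagonal with strictly positive diagonal entries. Then the symmetric matrix M̄ = [[−Θ_B^{-1}, A_Bᵀ],[A_B, D*]] has exactly n₂ negative and m positive eigenvalues, and: (i) every negative eigenvalue μ̄ satisfies μ̄ ≤ −min_j (Θ_B^{-1})_{jj} and μ̄ ≥ (1/2)( (min_i D*_{ii} − max_j (Θ_B^{-1})_{jj}) − [ (max_j (Θ_B^{-1})_{jj} + min_i D*_{ii})² + 4σ_max(A_B)² ]^{1/2} ); (ii) every positive eigenvalue μ̄ satisfies μ̄ ≤ (1/2)( max_i D*_{ii} + [ (max_i D*_{ii})² + 4σ_max(A_B)² ]^{1/2} ) and μ̄ ≥ (1/2)( (min_i D*_{ii} − max_j (Θ_B^{-1})_{jj}) + [ (max_j (Θ_B^{-1})_{jj} + min_i D*_{ii})² + 4σ_min(A_B)² ]^{1/2} ). -/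
open Matrix

/-- Spectral norm (largest singular value) of a real matrix. -/
noncomputable def specNorm {m n : ℕ} (A : Matrix (Fin m) (Fin n) ℝ) : ℝ :=
  Real.sqrt (⨆ i, (Matrix.isHermitian_mul_conjTranspose_self A).eigenvalues i)

/-- Smallest singular value of A (for m ≤ n): σ_min(A)² = λ_min(A Aᵀ). -/
noncomputable def sigMin {m n : ℕ} (A : Matrix (Fin m) (Fin n) ℝ) : ℝ :=
  Real.sqrt (⨅ i, (Matrix.isHermitian_mul_conjTranspose_self A).eigenvalues i)

/-!
On `{(u, 0)}` the quadratic form of `M̄` is `-uᵀΘ_B⁻¹u < 0` and on `{(0, v)}` it is `vᵀD*v > 0`;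
by the min-max (Sylvester) argument `M̄` has at least `n₂` negative and at least `m` positive
eigenvalues, hence exactly that many. For an eigenvector `(u, v)` with eigenvalue `μ`,
`A_Bᵀv = (μ + Θ_B⁻¹)u` and `A_Bu = (μ - D*)v`, and `vᵀA_Bu` computed in both ways gives
`∑ⱼ (μ + θⱼ) uⱼ² = ∑ᵢ (μ - eᵢ) vᵢ²`. Comparing the weights `μ + θⱼ`, `μ - eᵢ` with their
extremes and bounding `‖A_Bu‖`, `‖A_Bᵀv‖` by the singular values turns each bound into a quadratic
inequality `(μ + a)(μ - b) ≤ s²` or `≥ s²`, whose roots are the stated bounds.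
-/

open Finset

theorem quadratic_roots_bound_of_mul_le_sq {x a b s : ℝ} (h : (x + a) * (x - b) ≤ s ^ 2) :
    (1 / 2) * ((b - a) - √((a + b) ^ 2 + 4 * s ^ 2)) ≤ x ∧
      x ≤ (1 / 2) * ((b - a) + √((a + b) ^ 2 + 4 * s ^ 2)) := by
  have hsq : (2 * x + a - b) ^ 2 ≤ (a + b) ^ 2 + 4 * s ^ 2 := by nlinarith
  have := abs_le.mp (Real.abs_le_sqrt hsq)
  constructor <;> linarith

theorem quadratic_root_le_of_sq_le_mul {x a b s : ℝ} (hx : -a < x)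
    (h : s ^ 2 ≤ (x + a) * (x - b)) :
    (1 / 2) * ((b - a) + √((a + b) ^ 2 + 4 * s ^ 2)) ≤ x := by
  have hpos : 0 ≤ 2 * x + a - b := by nlinarith [sq_nonneg s]
  have hsq : (a + b) ^ 2 + 4 * s ^ 2 ≤ (2 * x + a - b) ^ 2 := by nlinarith
  have := Real.sqrt_le_sqrt hsq
  rw [Real.sqrt_sq hpos] at this
  linarith

theorem dotProduct_self_nonneg {ι : Type*} [Fintype ι] (w : ι → ℝ) : 0 ≤ w ⬝ᵥ w := by
  simpa using dotProduct_star_self_nonneg w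

theorem dotProduct_self_pos {ι : Type*} [Fintype ι] {w : ι → ℝ} (hw : w ≠ 0) : 0 < w ⬝ᵥ w := by
  simpa using dotProduct_star_self_pos_iff.mpr hw

theorem dotProduct_mul_dotProduct_le {ι : Type*} [Fintype ι] (u v : ι → ℝ) :
    (u ⬝ᵥ v) * (u ⬝ᵥ v) ≤ (u ⬝ᵥ u) * (v ⬝ᵥ v) := by
  simpa only [EuclideanSpace.inner_toLp_toLp, star_trivial, dotProduct_comm v u] using
    real_inner_mul_inner_self_le (WithLp.toLp 2 u) (WithLp.toLp 2 v)

theorem exists_ne_zero_mem_forall_dotProduct_eq_zero {K ι κ : Type*} [Field K] [Fintype ι]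
    [Fintype κ] (W : Submodule K (κ → K)) (v : ι → κ → K)
    (h : Fintype.card ι < Module.finrank K W) : ∃ x ∈ W, x ≠ 0 ∧ ∀ i, v i ⬝ᵥ x = 0 := by
  have hker : LinearMap.ker ((Matrix.of v).mulVecLin ∘ₗ W.subtype) ≠ ⊥ :=
    LinearMap.ker_ne_bot_of_finrank_lt (by rwa [Module.finrank_fintype_fun_eq_card])
  obtain ⟨x, hx, hx0⟩ := Submodule.exists_mem_ne_zero_of_ne_bot hker
  exact ⟨x, x.2, by simpa using hx0, fun i => congrFun (LinearMap.mem_ker.mp hx) i⟩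

namespace Matrix.IsHermitian

variable {ι : Type*} [Fintype ι] [DecidableEq ι] {S : Matrix ι ι ℝ} (hS : S.IsHermitian)

theorem dotProduct_self_eq_sum_sq (x : ι → ℝ) :
    x ⬝ᵥ x = ∑ i, (⇑(hS.eigenvectorBasis i) ⬝ᵥ x) ^ 2 := by
  have := hS.eigenvectorBasis.sum_inner_mul_inner (WithLp.toLp 2 x) (WithLp.toLp 2 x)
  simp only [EuclideanSpace.inner_eq_star_dotProduct, star_trivial] at this
  rw [← this]
  refine Finset.sum_congr rfl fun i _ => ?_
  rw [sq, dotProduct_comm]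

theorem dotProduct_mulVec_self_eq_sum (x : ι → ℝ) :
    x ⬝ᵥ (S *ᵥ x) = ∑ i, hS.eigenvalues i * (⇑(hS.eigenvectorBasis i) ⬝ᵥ x) ^ 2 := by
  have hx : x = ∑ i, (⇑(hS.eigenvectorBasis i) ⬝ᵥ x) • ⇑(hS.eigenvectorBasis i) := by
    have := congrArg WithLp.ofLp (hS.eigenvectorBasis.sum_repr' (WithLp.toLp 2 x))
    simpa [EuclideanSpace.inner_eq_star_dotProduct, dotProduct_comm] using this.symm
  conv_lhs => enter [2, 2]; rw [hx]
  rw [Matrix.mulVec_sum]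
  simp only [mulVec_smul, hS.mulVec_eigenvectorBasis, dotProduct_sum, dotProduct_smul,
    smul_eq_mul]
  refine Finset.sum_congr rfl fun i _ => ?_
  rw [dotProduct_comm x]; ring

theorem iInf_eigenvalues_mul_le_dotProduct_mulVec (x : ι → ℝ) :
    (⨅ i, hS.eigenvalues i) * (x ⬝ᵥ x) ≤ x ⬝ᵥ (S *ᵥ x) := by
  rw [hS.dotProduct_self_eq_sum_sq, hS.dotProduct_mulVec_self_eq_sum, Finset.mul_sum]
  gcongr with i
  exact ciInf_le (Finite.bddBelow_range _) i

theorem dotProduct_mulVec_le_iSup_eigenvalues_mul (x : ι → ℝ) :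
    x ⬝ᵥ (S *ᵥ x) ≤ (⨆ i, hS.eigenvalues i) * (x ⬝ᵥ x) := by
  rw [hS.dotProduct_self_eq_sum_sq, hS.dotProduct_mulVec_self_eq_sum, Finset.mul_sum]
  gcongr with i
  exact le_ciSup (Finite.bddAbove_range _) i

theorem finrank_le_card_eigenvalues_neg (W : Submodule ℝ (ι → ℝ))
    (hW : ∀ x ∈ W, x ≠ 0 → x ⬝ᵥ (S *ᵥ x) < 0) :
    Module.finrank ℝ W ≤ #{i | hS.eigenvalues i < 0} := by
  by_contra! hlt
  obtain ⟨x, hxW, hx0, hx⟩ := exists_ne_zero_mem_forall_dotProduct_eq_zero W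
    (fun i : {i // hS.eigenvalues i < 0} => ⇑(hS.eigenvectorBasis i))
    (by rwa [Fintype.card_subtype])
  refine (hW x hxW hx0).not_ge ?_
  rw [hS.dotProduct_mulVec_self_eq_sum]
  refine Finset.sum_nonneg fun i _ => ?_
  by_cases hi : hS.eigenvalues i < 0
  · simp [hx ⟨i, hi⟩]
  · exact mul_nonneg (not_lt.mp hi) (sq_nonneg _)

theorem finrank_le_card_eigenvalues_pos (W : Submodule ℝ (ι → ℝ))
    (hW : ∀ x ∈ W, x ≠ 0 → 0 < x ⬝ᵥ (S *ᵥ x)) :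
    Module.finrank ℝ W ≤ #{i | 0 < hS.eigenvalues i} := by
  by_contra! hlt
  obtain ⟨x, hxW, hx0, hx⟩ := exists_ne_zero_mem_forall_dotProduct_eq_zero W
    (fun i : {i // 0 < hS.eigenvalues i} => ⇑(hS.eigenvectorBasis i))
    (by rwa [Fintype.card_subtype])
  refine (hW x hxW hx0).not_ge ?_
  rw [hS.dotProduct_mulVec_self_eq_sum]
  refine Finset.sum_nonpos fun i _ => ?_
  by_cases hi : 0 < hS.eigenvalues i
  · simp [hx ⟨i, hi⟩]
  · exact mul_nonpos_of_nonpos_of_nonneg (not_lt.mp hi) (sq_nonneg _)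

theorem card_eigenvalues_neg_add_card_eigenvalues_pos_le :
    #{i | hS.eigenvalues i < 0} + #{i | 0 < hS.eigenvalues i} ≤ Fintype.card ι := by
  rw [← Finset.card_union_of_disjoint (Finset.disjoint_filter.mpr fun i _ h => h.not_gt)]
  exact Finset.card_le_univ _

section Blocks

variable {n m : Type*} [Fintype n] [Fintype m] [DecidableEq n] [DecidableEq m]
  {P : Matrix n n ℝ} {Q : Matrix n m ℝ} {R : Matrix m n ℝ} {T : Matrix m m ℝ}

theorem card_le_card_eigenvalues_neg_fromBlocks (hP : (-P).PosDef)
    (hS : (Matrix.fromBlocks P Q R T).IsHermitian) :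
    Fintype.card n ≤ #{i | hS.eigenvalues i < 0} := by
  let L : (n → ℝ) →ₗ[ℝ] (n ⊕ m → ℝ) :=
    (LinearEquiv.sumArrowLequivProdArrow n m ℝ ℝ).symm.toLinearMap ∘ₗ LinearMap.inl ℝ _ _
  have hL : Function.Injective L := fun u u' h => funext fun j => congrFun h (Sum.inl j)
  calc Fintype.card n = Module.finrank ℝ (LinearMap.range L) := by
        rw [LinearMap.finrank_range_of_inj hL, Module.finrank_fintype_fun_eq_card]
    _ ≤ _ := hS.finrank_le_card_eigenvalues_neg _ ?_
  rintro _ ⟨u, rfl⟩ hx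
  have hu : u ≠ 0 := by rintro rfl; exact hx (map_zero L)
  change Sum.elim u 0 ⬝ᵥ (Matrix.fromBlocks P Q R T *ᵥ Sum.elim u 0) < 0
  simpa [fromBlocks_mulVec, sumElim_dotProduct_sumElim, neg_mulVec] using
    hP.dotProduct_mulVec_pos hu

theorem card_le_card_eigenvalues_pos_fromBlocks (hT : T.PosDef)
    (hS : (Matrix.fromBlocks P Q R T).IsHermitian) :
    Fintype.card m ≤ #{i | 0 < hS.eigenvalues i} := by
  let L : (m → ℝ) →ₗ[ℝ] (n ⊕ m → ℝ) :=
    (LinearEquiv.sumArrowLequivProdArrow n m ℝ ℝ).symm.toLinearMap ∘ₗ LinearMap.inr ℝ _ _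
  have hL : Function.Injective L := fun v v' h => funext fun i => congrFun h (Sum.inr i)
  calc Fintype.card m = Module.finrank ℝ (LinearMap.range L) := by
        rw [LinearMap.finrank_range_of_inj hL, Module.finrank_fintype_fun_eq_card]
    _ ≤ _ := hS.finrank_le_card_eigenvalues_pos _ ?_
  rintro _ ⟨v, rfl⟩ hx
  have hv : v ≠ 0 := by rintro rfl; exact hx (map_zero L)
  change 0 < Sum.elim 0 v ⬝ᵥ (Matrix.fromBlocks P Q R T *ᵥ Sum.elim 0 v)
  simpa [fromBlocks_mulVec, sumElim_dotProduct_sumElim] using hT.dotProduct_mulVec_pos hv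

theorem card_eigenvalues_fromBlocks (hP : (-P).PosDef) (hT : T.PosDef)
    (hS : (Matrix.fromBlocks P Q R T).IsHermitian) :
    #{i | hS.eigenvalues i < 0} = Fintype.card n ∧
      #{i | 0 < hS.eigenvalues i} = Fintype.card m := by
  have hneg := card_le_card_eigenvalues_neg_fromBlocks hP hS
  have hpos := card_le_card_eigenvalues_pos_fromBlocks hT hS
  have htotal := hS.card_eigenvalues_neg_add_card_eigenvalues_pos_le
  rw [Fintype.card_sum] at htotal
  omega

end Blocks

end Matrix.IsHermitian

section WeightedSums

variable {ι : Type*} [Fintype ι] {c w : ι → ℝ}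

theorem mul_dotProduct_self_le_sum_mul_sq {a : ℝ} (h : ∀ i, a ≤ c i) :
    a * (w ⬝ᵥ w) ≤ ∑ i, c i * w i ^ 2 := by
  simp only [dotProduct, Finset.mul_sum, ← sq]
  gcongr with i
  exact h i

theorem sum_mul_sq_le_mul_dotProduct_self {b : ℝ} (h : ∀ i, c i ≤ b) :
    ∑ i, c i * w i ^ 2 ≤ b * (w ⬝ᵥ w) := by
  simp only [dotProduct, Finset.mul_sum, ← sq]
  gcongr with i
  exact h i

theorem mul_sum_mul_sq_le_sum_sq_mul_sq {a : ℝ} (ha : 0 ≤ a) (h : ∀ i, a ≤ c i) :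
    a * ∑ i, c i * w i ^ 2 ≤ ∑ i, c i ^ 2 * w i ^ 2 := by
  rw [Finset.mul_sum]
  refine Finset.sum_le_sum fun i _ => ?_
  have := mul_le_mul_of_nonneg_right (h i) (ha.trans (h i))
  nlinarith [sq_nonneg (w i)]

theorem sum_sq_mul_sq_le_mul_sum_mul_sq {b : ℝ} (h₀ : ∀ i, 0 ≤ c i) (h : ∀ i, c i ≤ b) :
    ∑ i, c i ^ 2 * w i ^ 2 ≤ b * ∑ i, c i * w i ^ 2 := by
  rw [Finset.mul_sum]
  refine Finset.sum_le_sum fun i _ => ?_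
  have := mul_le_mul_of_nonneg_right (h i) (h₀ i)
  nlinarith [sq_nonneg (w i)]

theorem mul_dotProduct_mul_eq_sum_sq_mul_sq :
    (fun i => c i * w i) ⬝ᵥ (fun i => c i * w i) = ∑ i, c i ^ 2 * w i ^ 2 :=
  Finset.sum_congr rfl fun i _ => by ring

end WeightedSums

section SingularValues

variable {m n : ℕ} (A : Matrix (Fin m) (Fin n) ℝ)

theorem dotProduct_transpose_mulVec_self (w : Fin m → ℝ) :
    (Aᵀ *ᵥ w) ⬝ᵥ (Aᵀ *ᵥ w) = w ⬝ᵥ ((A * Aᴴ) *ᵥ w) := by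
  rw [conjTranspose_eq_transpose_of_trivial, ← mulVec_mulVec, dotProduct_mulVec w A,
    ← mulVec_transpose]

theorem specNorm_sq :
    specNorm A ^ 2 = ⨆ i, (isHermitian_mul_conjTranspose_self A).eigenvalues i :=
  Real.sq_sqrt (Real.iSup_nonneg A.eigenvalues_self_mul_conjTranspose_nonneg)

theorem sigMin_sq : sigMin A ^ 2 = ⨅ i, (isHermitian_mul_conjTranspose_self A).eigenvalues i :=
  Real.sq_sqrt (Real.iInf_nonneg A.eigenvalues_self_mul_conjTranspose_nonneg)

theorem dotProduct_transpose_mulVec_le_specNorm_sq (w : Fin m → ℝ) :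
    (Aᵀ *ᵥ w) ⬝ᵥ (Aᵀ *ᵥ w) ≤ specNorm A ^ 2 * (w ⬝ᵥ w) := by
  rw [dotProduct_transpose_mulVec_self, specNorm_sq]
  exact (isHermitian_mul_conjTranspose_self A).dotProduct_mulVec_le_iSup_eigenvalues_mul w

theorem sigMin_sq_mul_le_dotProduct_transpose_mulVec (w : Fin m → ℝ) :
    sigMin A ^ 2 * (w ⬝ᵥ w) ≤ (Aᵀ *ᵥ w) ⬝ᵥ (Aᵀ *ᵥ w) := by
  rw [dotProduct_transpose_mulVec_self, sigMin_sq]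
  exact (isHermitian_mul_conjTranspose_self A).iInf_eigenvalues_mul_le_dotProduct_mulVec w

/-- `specNorm` is defined through `A Aᵀ`; Cauchy–Schwarz in `‖Au‖² = ⟪u, Aᵀ(Au)⟫` transfers the
bound from `Aᵀ` to `A`. -/
theorem dotProduct_mulVec_le_specNorm_sq (u : Fin n → ℝ) :
    (A *ᵥ u) ⬝ᵥ (A *ᵥ u) ≤ specNorm A ^ 2 * (u ⬝ᵥ u) := by
  set y := A *ᵥ u
  have hy : y ⬝ᵥ y = u ⬝ᵥ (Aᵀ *ᵥ y) := by
    rw [dotProduct_comm u, mulVec_transpose, ← dotProduct_mulVec]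
  have hcs : (y ⬝ᵥ y) * (y ⬝ᵥ y) ≤ (specNorm A ^ 2 * (u ⬝ᵥ u)) * (y ⬝ᵥ y) := calc
    (y ⬝ᵥ y) * (y ⬝ᵥ y) ≤ (u ⬝ᵥ u) * ((Aᵀ *ᵥ y) ⬝ᵥ (Aᵀ *ᵥ y)) :=
      hy ▸ dotProduct_mul_dotProduct_le _ _
    _ ≤ (u ⬝ᵥ u) * (specNorm A ^ 2 * (y ⬝ᵥ y)) := by
      gcongr
      · exact dotProduct_self_nonneg u
      · exact dotProduct_transpose_mulVec_le_specNorm_sq A y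
    _ = _ := by ring
  rcases (dotProduct_self_nonneg y).eq_or_lt with hy0 | hy0
  · rw [← hy0]
    exact mul_nonneg (sq_nonneg _) (dotProduct_self_nonneg u)
  · exact le_of_mul_le_mul_right hcs hy0

end SingularValues

section BlockEigenpair

variable {ι κ : Type*} [Fintype ι] [Fintype κ]

/-- The eigen-equations `M̄ (u, v) = μ (u, v)` for `M̄ = [[-diag θ, Aᵀ], [A, diag e]]`, solved for
`Aᵀ v` and `A u`. -/
structure IsBlockEigenpair (A : Matrix κ ι ℝ) (θ : ι → ℝ) (e : κ → ℝ) (μ : ℝ) (u : ι → ℝ)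
    (v : κ → ℝ) : Prop where
  transpose_mulVec : Aᵀ *ᵥ v = fun j => (μ + θ j) * u j
  mulVec : A *ᵥ u = fun i => (μ - e i) * v i

variable {A : Matrix κ ι ℝ} {θ : ι → ℝ} {e : κ → ℝ} {μ : ℝ} {u : ι → ℝ} {v : κ → ℝ}

theorem IsBlockEigenpair.of_fromBlocks_mulVec_eq_smul [DecidableEq ι] [DecidableEq κ]
    (h : fromBlocks (-diagonal θ) Aᵀ A (diagonal e) *ᵥ Sum.elim u v = μ • Sum.elim u v) :
    IsBlockEigenpair A θ e μ u v := by
  simp only [fromBlocks_mulVec, Sum.elim_comp_inl, Sum.elim_comp_inr, funext_iff, Sum.forall,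
    Pi.smul_apply, Sum.elim_inl, Sum.elim_inr, Pi.add_apply, neg_mulVec, Pi.neg_apply,
    mulVec_diagonal, smul_eq_mul] at h
  exact ⟨funext fun j => by linarith [h.1 j], funext fun i => by linarith [h.2 i]⟩

namespace IsBlockEigenpair

theorem sum_add_mul_sq_eq_sum_sub_mul_sq (h : IsBlockEigenpair A θ e μ u v) :
    ∑ j, (μ + θ j) * u j ^ 2 = ∑ i, (μ - e i) * v i ^ 2 := calc
  ∑ j, (μ + θ j) * u j ^ 2 = (Aᵀ *ᵥ v) ⬝ᵥ u := by
    rw [h.transpose_mulVec]; exact Finset.sum_congr rfl fun j _ => by ring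
  _ = v ⬝ᵥ (A *ᵥ u) := by rw [mulVec_transpose, dotProduct_mulVec]
  _ = ∑ i, (μ - e i) * v i ^ 2 := by
    rw [h.mulVec]; exact Finset.sum_congr rfl fun i _ => by ring

theorem left_ne_zero (h : IsBlockEigenpair A θ e μ u v) (hμ : ∀ i, μ ≠ e i)
    (huv : Sum.elim u v ≠ 0) : u ≠ 0 := by
  rintro rfl
  have hv : v = 0 := funext fun i => by
    have := congrFun h.mulVec i
    rw [mulVec_zero, Pi.zero_apply, eq_comm, mul_eq_zero] at this
    exact this.resolve_left (sub_ne_zero.mpr (hμ i))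
  exact huv (by rw [hv, Sum.elim_zero_zero])

theorem right_ne_zero (h : IsBlockEigenpair A θ e μ u v) (hμ : ∀ j, μ + θ j ≠ 0)
    (huv : Sum.elim u v ≠ 0) : v ≠ 0 := by
  rintro rfl
  have hu : u = 0 := funext fun j => by
    have := congrFun h.transpose_mulVec j
    rw [mulVec_zero, Pi.zero_apply, eq_comm, mul_eq_zero] at this
    exact this.resolve_left (hμ j)
  exact huv (by rw [hu, Sum.elim_zero_zero])

end IsBlockEigenpair

end BlockEigenpair

namespace IsBlockEigenpair

variable {m n : ℕ} {A : Matrix (Fin m) (Fin n) ℝ} {θ : Fin n → ℝ} {e : Fin m → ℝ} {μ : ℝ}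
  {u : Fin n → ℝ} {v : Fin m → ℝ}

theorem add_iInf_le_zero (h : IsBlockEigenpair A θ e μ u v) (hμ : ∀ i, μ ≤ e i)
    (hu : u ≠ 0) : μ + ⨅ j, θ j ≤ 0 := by
  have hmul : (μ + ⨅ j, θ j) * (u ⬝ᵥ u) ≤ 0 * (v ⬝ᵥ v) := calc
    (μ + ⨅ j, θ j) * (u ⬝ᵥ u) ≤ ∑ j, (μ + θ j) * u j ^ 2 :=
      mul_dotProduct_self_le_sum_mul_sq fun j => by
        gcongr; exact ciInf_le (Finite.bddBelow_range θ) j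
    _ = ∑ i, (μ - e i) * v i ^ 2 := h.sum_add_mul_sq_eq_sum_sub_mul_sq
    _ ≤ 0 * (v ⬝ᵥ v) := sum_mul_sq_le_mul_dotProduct_self fun i => sub_nonpos.mpr (hμ i)
  rw [zero_mul] at hmul
  exact nonpos_of_mul_nonpos_left hmul (dotProduct_self_pos hu)

theorem add_iSup_mul_sub_iInf_le_specNorm_sq (h : IsBlockEigenpair A θ e μ u v)
    (hμ : μ ≤ ⨅ i, e i) (hu : u ≠ 0) :
    (μ + ⨆ j, θ j) * (μ - ⨅ i, e i) ≤ specNorm A ^ 2 := by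
  have hle : ∀ i, (⨅ i, e i) - μ ≤ e i - μ := fun i => by
    gcongr; exact ciInf_le (Finite.bddBelow_range e) i
  have hsum : -((μ + ⨆ j, θ j) * (u ⬝ᵥ u)) ≤ ∑ i, (e i - μ) * v i ^ 2 := by
    have := sum_mul_sq_le_mul_dotProduct_self (w := u) fun j => show μ + θ j ≤ μ + ⨆ j, θ j by
      gcongr; exact le_ciSup (Finite.bddAbove_range θ) j
    rw [h.sum_add_mul_sq_eq_sum_sub_mul_sq] at this
    simp only [← neg_sub μ, neg_mul, Finset.sum_neg_distrib] at this ⊢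
    linarith
  have hmul : (μ + ⨆ j, θ j) * (μ - ⨅ i, e i) * (u ⬝ᵥ u) ≤ specNorm A ^ 2 * (u ⬝ᵥ u) := calc
    (μ + ⨆ j, θ j) * (μ - ⨅ i, e i) * (u ⬝ᵥ u)
        = ((⨅ i, e i) - μ) * -((μ + ⨆ j, θ j) * (u ⬝ᵥ u)) := by ring
    _ ≤ ((⨅ i, e i) - μ) * ∑ i, (e i - μ) * v i ^ 2 := by gcongr
    _ ≤ ∑ i, (e i - μ) ^ 2 * v i ^ 2 := mul_sum_mul_sq_le_sum_sq_mul_sq (by linarith) hle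
    _ = (A *ᵥ u) ⬝ᵥ (A *ᵥ u) := by
      rw [h.mulVec, mul_dotProduct_mul_eq_sum_sq_mul_sq]
      exact Finset.sum_congr rfl fun i _ => by ring
    _ ≤ specNorm A ^ 2 * (u ⬝ᵥ u) := dotProduct_mulVec_le_specNorm_sq A u
  exact le_of_mul_le_mul_right hmul (dotProduct_self_pos hu)

theorem mul_sub_iSup_le_specNorm_sq (h : IsBlockEigenpair A θ e μ u v) (hμ : 0 ≤ μ)
    (hθ : ∀ j, 0 ≤ θ j) (hv : v ≠ 0) :
    μ * (μ - ⨆ i, e i) ≤ specNorm A ^ 2 := by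
  have hmul : μ * (μ - ⨆ i, e i) * (v ⬝ᵥ v) ≤ specNorm A ^ 2 * (v ⬝ᵥ v) := calc
    μ * (μ - ⨆ i, e i) * (v ⬝ᵥ v) = μ * ((μ - ⨆ i, e i) * (v ⬝ᵥ v)) := by ring
    _ ≤ μ * ∑ i, (μ - e i) * v i ^ 2 := by
      gcongr
      refine mul_dotProduct_self_le_sum_mul_sq fun i => ?_
      gcongr; exact le_ciSup (Finite.bddAbove_range e) i
    _ = μ * ∑ j, (μ + θ j) * u j ^ 2 := by rw [h.sum_add_mul_sq_eq_sum_sub_mul_sq]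
    _ ≤ ∑ j, (μ + θ j) ^ 2 * u j ^ 2 :=
      mul_sum_mul_sq_le_sum_sq_mul_sq hμ fun j => le_add_of_nonneg_right (hθ j)
    _ = (Aᵀ *ᵥ v) ⬝ᵥ (Aᵀ *ᵥ v) := by rw [h.transpose_mulVec, mul_dotProduct_mul_eq_sum_sq_mul_sq]
    _ ≤ specNorm A ^ 2 * (v ⬝ᵥ v) := dotProduct_transpose_mulVec_le_specNorm_sq A v
  exact le_of_mul_le_mul_right hmul (dotProduct_self_pos hv)

theorem sigMin_sq_le_add_iSup_mul_sub_iInf (h : IsBlockEigenpair A θ e μ u v) (hμ : 0 ≤ μ)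
    (hθ : ∀ j, 0 ≤ θ j) (hv : v ≠ 0) :
    sigMin A ^ 2 ≤ (μ + ⨆ j, θ j) * (μ - ⨅ i, e i) := by
  have hθmax : ∀ j, μ + θ j ≤ μ + ⨆ j, θ j := fun j => by
    gcongr; exact le_ciSup (Finite.bddAbove_range θ) j
  have hmul : sigMin A ^ 2 * (v ⬝ᵥ v) ≤ (μ + ⨆ j, θ j) * (μ - ⨅ i, e i) * (v ⬝ᵥ v) := calc
    sigMin A ^ 2 * (v ⬝ᵥ v) ≤ (Aᵀ *ᵥ v) ⬝ᵥ (Aᵀ *ᵥ v) :=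
      sigMin_sq_mul_le_dotProduct_transpose_mulVec A v
    _ = ∑ j, (μ + θ j) ^ 2 * u j ^ 2 := by
      rw [h.transpose_mulVec, mul_dotProduct_mul_eq_sum_sq_mul_sq]
    _ ≤ (μ + ⨆ j, θ j) * ∑ j, (μ + θ j) * u j ^ 2 :=
      sum_sq_mul_sq_le_mul_sum_mul_sq (fun j => add_nonneg hμ (hθ j)) hθmax
    _ = (μ + ⨆ j, θ j) * ∑ i, (μ - e i) * v i ^ 2 := by
      rw [h.sum_add_mul_sq_eq_sum_sub_mul_sq]
    _ ≤ (μ + ⨆ j, θ j) * ((μ - ⨅ i, e i) * (v ⬝ᵥ v)) := by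
      have : 0 ≤ ⨆ j, θ j := Real.iSup_nonneg hθ
      gcongr
      refine sum_mul_sq_le_mul_dotProduct_self fun i => ?_
      gcongr; exact ciInf_le (Finite.bddBelow_range e) i
    _ = _ := by ring
  exact le_of_mul_le_mul_right hmul (dotProduct_self_pos hv)

end IsBlockEigenpair

theorem stmt_18_general {m n₂ : ℕ} (AB : Matrix (Fin m) (Fin n₂) ℝ)
    (d : Fin n₂ → ℝ) (hd : ∀ j, 0 < d j)
    (e : Fin m → ℝ) (he : ∀ i, 0 < e i)
    (M : Matrix (Fin n₂ ⊕ Fin m) (Fin n₂ ⊕ Fin m) ℝ)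
    (hMdef : M = Matrix.fromBlocks (-(Matrix.diagonal d)⁻¹) ABᵀ AB (Matrix.diagonal e))
    (hM : M.IsHermitian) :
    (Finset.univ.filter fun i => hM.eigenvalues i < 0).card = n₂ ∧
    (Finset.univ.filter fun i => 0 < hM.eigenvalues i).card = m ∧
    (∀ μ : ℝ, μ < 0 →
      ∀ x : Fin n₂ ⊕ Fin m → ℝ, x ≠ 0 → M.mulVec x = μ • x →
      (μ ≤ -(⨅ j, (Matrix.diagonal d)⁻¹ j j)) ∧
      ((1 / 2) * (((⨅ i, e i) - ⨆ j, (Matrix.diagonal d)⁻¹ j j) -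
        Real.sqrt (((⨆ j, (Matrix.diagonal d)⁻¹ j j) + ⨅ i, e i) ^ 2 +
          4 * specNorm AB ^ 2)) ≤ μ)) ∧
    (∀ μ : ℝ, 0 < μ →
      ∀ x : Fin n₂ ⊕ Fin m → ℝ, x ≠ 0 → M.mulVec x = μ • x →
      (μ ≤ (1 / 2) * ((⨆ i, e i) +
        Real.sqrt ((⨆ i, e i) ^ 2 + 4 * specNorm AB ^ 2))) ∧
      ((1 / 2) * (((⨅ i, e i) - ⨆ j, (Matrix.diagonal d)⁻¹ j j) +
        Real.sqrt (((⨆ j, (Matrix.diagonal d)⁻¹ j j) + ⨅ i, e i) ^ 2 +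
          4 * sigMin AB ^ 2)) ≤ μ)) := by
  have hθ (j : Fin n₂) : 0 < (d j)⁻¹ := inv_pos.mpr (hd j)
  have hinv : (diagonal d)⁻¹ = diagonal fun j => (d j)⁻¹ :=
    inv_eq_right_inv (by simp [diagonal_mul_diagonal, (hd _).ne'])
  subst hMdef
  have hcount := hM.card_eigenvalues_fromBlocks (by simpa [hinv] using hθ)
    (PosDef.diagonal he)
  simp only [Fintype.card_fin] at hcount
  refine ⟨hcount.1, hcount.2, fun μ hμ x hx hMx => ?_, fun μ hμ x hx hMx => ?_⟩ <;>
    rw [← Sum.elim_comp_inl_inr x] at hx hMx <;>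
    have h := IsBlockEigenpair.of_fromBlocks_mulVec_eq_smul (hinv ▸ hMx) <;>
    simp only [hinv, diagonal_apply_eq]
  · have hu := h.left_ne_zero (fun i => (hμ.trans (he i)).ne) hx
    have hemin : μ ≤ ⨅ i, e i := hμ.le.trans (Real.iInf_nonneg fun i => (he i).le)
    exact ⟨by linarith [h.add_iInf_le_zero (fun i => (hμ.trans (he i)).le) hu],
      (quadratic_roots_bound_of_mul_le_sq (h.add_iSup_mul_sub_iInf_le_specNorm_sq hemin hu)).1⟩
  · have hv := h.right_ne_zero (fun j => (add_pos hμ (hθ j)).ne') hx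
    have hθmax : -(⨆ j, (d j)⁻¹) < μ := by
      linarith [Real.iSup_nonneg fun j => (hθ j).le]
    refine ⟨?_, quadratic_root_le_of_sq_le_mul hθmax
      (h.sigMin_sq_le_add_iSup_mul_sub_iInf hμ.le (fun j => (hθ j).le) hv)⟩
    simpa using (quadratic_roots_bound_of_mul_le_sq (a := 0)
      (by simpa using h.mul_sub_iSup_le_specNorm_sq hμ.le (fun j => (hθ j).le) hv)).2

/-- Theorem 3.2 of the paper: with `Θ_B` diagonal positive and `D*` diagonal positive,
`M̄ = [[−Θ_B⁻¹, A_Bᵀ],[A_B, D*]]` has exactly `n₂` negative and `m` positive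
eigenvalues, every negative eigenvalue `μ̄` satisfies
`μ̄ ≤ −min_j (Θ_B⁻¹)_jj` and
`μ̄ ≥ ½((min_i D*_ii − max_j (Θ_B⁻¹)_jj) − √((max_j (Θ_B⁻¹)_jj + min_i D*_ii)² + 4σ_max(A_B)²))`,
and every positive eigenvalue `μ̄` satisfies
`μ̄ ≤ ½(max_i D*_ii + √((max_i D*_ii)² + 4σ_max(A_B)²))` and
`μ̄ ≥ ½((min_i D*_ii − max_j (Θ_B⁻¹)_jj) + √((max_j (Θ_B⁻¹)_jj + min_i D*_ii)² + 4σ_min(A_B)²))`. -/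
theorem stmt_18 {m n₂ : ℕ} (hmn : m ≤ n₂) (AB : Matrix (Fin m) (Fin n₂) ℝ)
    (d : Fin n₂ → ℝ) (hd : ∀ j, 0 < d j)
    (e : Fin m → ℝ) (he : ∀ i, 0 < e i)
    (M : Matrix (Fin n₂ ⊕ Fin m) (Fin n₂ ⊕ Fin m) ℝ)
    (hMdef : M = Matrix.fromBlocks (-(Matrix.diagonal d)⁻¹) ABᵀ AB (Matrix.diagonal e))
    (hM : M.IsHermitian) :
    (Finset.univ.filter fun i => hM.eigenvalues i < 0).card = n₂ ∧
    (Finset.univ.filter fun i => 0 < hM.eigenvalues i).card = m ∧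
    (∀ μ : ℝ, μ < 0 →
      ∀ x : Fin n₂ ⊕ Fin m → ℝ, x ≠ 0 → M.mulVec x = μ • x →
      (μ ≤ -(⨅ j, (Matrix.diagonal d)⁻¹ j j)) ∧
      ((1 / 2) * (((⨅ i, e i) - ⨆ j, (Matrix.diagonal d)⁻¹ j j) -
        Real.sqrt (((⨆ j, (Matrix.diagonal d)⁻¹ j j) + ⨅ i, e i) ^ 2 +
          4 * specNorm AB ^ 2)) ≤ μ)) ∧
    (∀ μ : ℝ, 0 < μ →
      ∀ x : Fin n₂ ⊕ Fin m → ℝ, x ≠ 0 → M.mulVec x = μ • x →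
      (μ ≤ (1 / 2) * ((⨆ i, e i) +
        Real.sqrt ((⨆ i, e i) ^ 2 + 4 * specNorm AB ^ 2))) ∧
      ((1 / 2) * (((⨅ i, e i) - ⨆ j, (Matrix.diagonal d)⁻¹ j j) +
        Real.sqrt (((⨆ j, (Matrix.diagonal d)⁻¹ j j) + ⨅ i, e i) ^ 2 +
          4 * sigMin AB ^ 2)) ≤ μ)) :=
  stmt_18_general AB d hd e he M hMdef hM
end

section
/- Let G ∈ ℝ^{m×n₂} with m ≤ n₂, let H̄ ∈ ℝ^{n₂×n₂} be symmetric positive definite, and let D* ∈ ℝ^{m×m} be diagonal with strictly positive diagonal entries. Then the symmetric matrix M̄ = [[−H̄, Gᵀ],[G, D*]] has exactly n₂ negative and m positive eigenvalues, and: (i) every negative eigenvalue μ̄ satisfies μ̄ ≤ −λ_min(H̄) and μ̄ ≥ (1/2)( (min_j D*_{jj} − λ_max(H̄)) − [ (λ_max(H̄) + min_j D*_{jj})² + 4σ_max(G)² ]^{1/2} ); (ii) every positive eigenvalue μ̄ satisfies μ̄ ≤ (1/2)( max_j D*_{jj} + [ (max_j D*_{jj})² + 4σ_max(G)² ]^{1/2}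 ) and μ̄ ≥ (1/2)( (min_j D*_{jj} − λ_max(H̄)) + [ (λ_max(H̄) + min_j D*_{jj})² + 4σ_min(G)² ]^{1/2} ). -/
open Matrix

/-!
The quadratic form of `M̄` is negative definite on the `n₂`-dimensional subspace `{(u, 0)}` and
positive definite on the `m`-dimensional subspace `{(H̄⁻¹ Gᵀ y, y)}`, where it equals
`⟪u, H̄ u⟫ + ⟪y, D* y⟫`. Written in an orthonormal eigenbasis of `M̄`, each of these subspaces
injects into the span of the eigenvectors of the matching sign, which gives the inertia.

An eigenvector `(u, v)` for `μ` satisfies `Gᵀ v = (μ + H̄) u` and `G u = (μ - D*) v`. Pairing these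
with `u` and `v` and estimating `H̄`, `D*` by their extreme eigenvalues and `G` by its extreme
singular values gives `(μ + λ_max)(μ - d_min) ≤ σ_max²` for `μ < 0`, and `μ (μ - d_max) ≤ σ_max²`,
`σ_min² ≤ (μ + λ_max)(μ - d_min)` for `μ > 0`; the bounds are the roots of these quadratics.
-/

section WeightedSums

variable {ι : Type*} [Fintype ι] {w c : ι → ℝ} {b : ℝ}

lemma sum_mul_sq_le_mul_sum_sq (hb : ∀ i, w i ≤ b) :
    ∑ i, w i * c i ^ 2 ≤ b * ∑ i, c i ^ 2 := by
  rw [Finset.mul_sum]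
  exact Finset.sum_le_sum fun i _ => mul_le_mul_of_nonneg_right (hb i) (sq_nonneg _)

lemma mul_sum_sq_le_sum_mul_sq (hb : ∀ i, b ≤ w i) :
    b * ∑ i, c i ^ 2 ≤ ∑ i, w i * c i ^ 2 := by
  rw [Finset.mul_sum]
  exact Finset.sum_le_sum fun i _ => mul_le_mul_of_nonneg_right (hb i) (sq_nonneg _)

lemma sum_mul_mul_sq_le (hw : ∀ i, 0 ≤ w i) (hb : ∀ i, w i ≤ b) :
    ∑ i, (w i * c i) ^ 2 ≤ b * ∑ i, w i * c i ^ 2 := by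
  rw [Finset.mul_sum]
  refine Finset.sum_le_sum fun i _ => ?_
  nlinarith [mul_le_mul_of_nonneg_left (hb i) (mul_nonneg (hw i) (sq_nonneg (c i)))]

lemma mul_sum_le_sum_mul_mul_sq (hb0 : 0 ≤ b) (hb : ∀ i, b ≤ w i) :
    b * ∑ i, w i * c i ^ 2 ≤ ∑ i, (w i * c i) ^ 2 := by
  rw [Finset.mul_sum]
  refine Finset.sum_le_sum fun i _ => ?_
  nlinarith [mul_le_mul_of_nonneg_right (hb i) (mul_nonneg (hb0.trans (hb i)) (sq_nonneg (c i)))]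

end WeightedSums

lemma abs_two_mul_add_sub_le_sqrt {a b c μ : ℝ} (h : (μ + a) * (μ - b) ≤ c) :
    |2 * μ + a - b| ≤ √((a + b) ^ 2 + 4 * c) :=
  Real.abs_le_sqrt (by nlinarith)

lemma sqrt_le_two_mul_add_sub {a b c μ : ℝ} (hc : 0 ≤ c) (ha : 0 < μ + a)
    (h : c ≤ (μ + a) * (μ - b)) : √((a + b) ^ 2 + 4 * c) ≤ 2 * μ + a - b := by
  have hb : 0 ≤ μ - b := nonneg_of_mul_nonneg_right (hc.trans h) ha
  exact (Real.sqrt_le_left (by linarith)).2 (by nlinarith)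

section DotProduct

variable {ι κ : Type*} [Fintype ι] [Fintype κ]

lemma dotProduct_self_nonneg_s19 (x : ι → ℝ) : 0 ≤ x ⬝ᵥ x := by
  simpa using dotProduct_star_self_nonneg x

lemma dotProduct_self_pos_s19 {x : ι → ℝ} (hx : x ≠ 0) : 0 < x ⬝ᵥ x := by
  simpa using dotProduct_star_self_pos_iff.2 hx

lemma dotProduct_sq_le (x y : ι → ℝ) : (x ⬝ᵥ y) ^ 2 ≤ (x ⬝ᵥ x) * (y ⬝ᵥ y) := by
  simpa only [dotProduct, sq] using Finset.sum_mul_sq_le_sq_mul_sq Finset.univ x y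

lemma mulVec_dotProduct_le_of_transpose {G : Matrix κ ι ℝ} {c : ℝ} (hc : 0 ≤ c)
    (hG : ∀ w, Gᵀ *ᵥ w ⬝ᵥ Gᵀ *ᵥ w ≤ c * (w ⬝ᵥ w)) (u : ι → ℝ) :
    G *ᵥ u ⬝ᵥ G *ᵥ u ≤ c * (u ⬝ᵥ u) := by
  set w := G *ᵥ u
  have hCS : (w ⬝ᵥ w) ^ 2 ≤ c * (w ⬝ᵥ w) * (u ⬝ᵥ u) := by
    calc (w ⬝ᵥ w) ^ 2 = (Gᵀ *ᵥ w ⬝ᵥ u) ^ 2 := by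
          rw [dotProduct_comm (Gᵀ *ᵥ w), dotProduct_transpose_mulVec]
      _ ≤ (Gᵀ *ᵥ w ⬝ᵥ Gᵀ *ᵥ w) * (u ⬝ᵥ u) := dotProduct_sq_le _ _
      _ ≤ c * (w ⬝ᵥ w) * (u ⬝ᵥ u) :=
        mul_le_mul_of_nonneg_right (hG w) (dotProduct_self_nonneg_s19 u)
  rcases (dotProduct_self_nonneg_s19 w).eq_or_lt with hw | hw
  · rw [← hw]
    exact mul_nonneg hc (dotProduct_self_nonneg_s19 u)
  · nlinarith

lemma sumElim_dotProduct_fromBlocks_mulVec {R : Type*} [NonUnitalNonAssocSemiring R]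
    (A : Matrix ι ι R) (B : Matrix ι κ R) (C : Matrix κ ι R) (D : Matrix κ κ R)
    (u : ι → R) (v : κ → R) :
    Sum.elim u v ⬝ᵥ fromBlocks A B C D *ᵥ Sum.elim u v =
      u ⬝ᵥ A *ᵥ u + u ⬝ᵥ B *ᵥ v + (v ⬝ᵥ C *ᵥ u + v ⬝ᵥ D *ᵥ v) := by
  simp only [fromBlocks_mulVec, Sum.elim_comp_inl, Sum.elim_comp_inr, sumElim_dotProduct_sumElim,
    dotProduct_add]

lemma Matrix.PosDef.real_dotProduct_mulVec_pos {A : Matrix ι ι ℝ} (hA : A.PosDef) {x : ι → ℝ}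
    (hx : x ≠ 0) : 0 < x ⬝ᵥ A *ᵥ x := by
  simpa using hA.dotProduct_mulVec_pos hx

end DotProduct

namespace Matrix.IsHermitian

open Finset

variable {n : Type*} [Fintype n] [DecidableEq n] {A : Matrix n n ℝ} (hA : A.IsHermitian)
  {ι : Type*} [Fintype ι] {b : ℝ}

noncomputable def eigCoord : (n → ℝ) →ₗ[ℝ] n → ℝ :=
  (hA.eigenvectorUnitary : Matrix n n ℝ)ᵀ.mulVecLin

lemma eigCoord_apply (x : n → ℝ) (i : n) :
    hA.eigCoord x i = ⇑(hA.eigenvectorBasis i) ⬝ᵥ x :=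
  rfl

lemma dotProduct_eigCoord (x y : n → ℝ) : hA.eigCoord x ⬝ᵥ hA.eigCoord y = x ⬝ᵥ y := by
  have hU := Unitary.coe_mul_star_self hA.eigenvectorUnitary
  rw [Unitary.coe_star, star_eq_conjTranspose, conjTranspose_eq_transpose_of_trivial] at hU
  simp only [eigCoord, mulVecLin_apply]
  rw [dotProduct_mulVec, vecMul_transpose, mulVec_mulVec, hU, one_mulVec, dotProduct_comm]

lemma eigCoord_mulVec (x : n → ℝ) (i : n) :
    hA.eigCoord (A *ᵥ x) i = hA.eigenvalues i * hA.eigCoord x i := by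
  rw [eigCoord_apply, eigCoord_apply, ← dotProduct_transpose_mulVec,
    ← conjTranspose_eq_transpose_of_trivial, hA.eq, hA.mulVec_eigenvectorBasis, dotProduct_smul,
    dotProduct_comm, smul_eq_mul]

lemma dotProduct_mulVec_eq_sum (x : n → ℝ) :
    x ⬝ᵥ A *ᵥ x = ∑ i, hA.eigenvalues i * hA.eigCoord x i ^ 2 := by
  rw [← dotProduct_eigCoord hA]
  exact Finset.sum_congr rfl fun i _ => by rw [eigCoord_mulVec]; ring

lemma dotProduct_self_eq_sum (x : n → ℝ) : x ⬝ᵥ x = ∑ i, hA.eigCoord x i ^ 2 := by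
  rw [← dotProduct_eigCoord hA]
  exact Finset.sum_congr rfl fun i _ => (sq _).symm

lemma dotProduct_mulVec_le (hb : ∀ i, hA.eigenvalues i ≤ b) (x : n → ℝ) :
    x ⬝ᵥ A *ᵥ x ≤ b * (x ⬝ᵥ x) := by
  rw [hA.dotProduct_mulVec_eq_sum, hA.dotProduct_self_eq_sum]
  exact sum_mul_sq_le_mul_sum_sq hb

lemma le_dotProduct_mulVec (hb : ∀ i, b ≤ hA.eigenvalues i) (x : n → ℝ) :
    b * (x ⬝ᵥ x) ≤ x ⬝ᵥ A *ᵥ x := by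
  rw [hA.dotProduct_mulVec_eq_sum, hA.dotProduct_self_eq_sum]
  exact mul_sum_sq_le_sum_mul_sq hb

lemma dotProduct_self_smul_add_mulVec_le {s : ℝ} (hs : ∀ i, 0 ≤ s + hA.eigenvalues i)
    (hb : ∀ i, s + hA.eigenvalues i ≤ b) (x : n → ℝ) :
    (s • x + A *ᵥ x) ⬝ᵥ (s • x + A *ᵥ x) ≤ b * (x ⬝ᵥ (s • x + A *ᵥ x)) := by
  have hcoord : ∀ i, hA.eigCoord (s • x + A *ᵥ x) i = (s + hA.eigenvalues i) * hA.eigCoord x i :=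
    fun i => by simp only [map_add, map_smul, Pi.add_apply, Pi.smul_apply, smul_eq_mul,
      eigCoord_mulVec]; ring
  rw [← dotProduct_eigCoord hA, ← dotProduct_eigCoord hA x]
  simp only [dotProduct, hcoord]
  convert sum_mul_mul_sq_le (c := hA.eigCoord x) hs hb using 3 <;> ring

lemma card_le_card_filter_eigenvalues (p : ℝ → Prop) [DecidablePred p]
    (f : (ι → ℝ) →ₗ[ℝ] n → ℝ)
    (hf : ∀ y, (∀ i, p (hA.eigenvalues i) → hA.eigCoord (f y) i = 0) → y = 0) :
    Fintype.card ι ≤ #{i | p (hA.eigenvalues i)} := by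
  set S : Finset n := {i | p (hA.eigenvalues i)}
  let g : (ι → ℝ) →ₗ[ℝ] S → ℝ := LinearMap.funLeft ℝ ℝ Subtype.val ∘ₗ hA.eigCoord ∘ₗ f
  have hg : Function.Injective g := by
    rw [← LinearMap.ker_eq_bot, LinearMap.ker_eq_bot']
    exact fun y hy => hf y fun i hi => congrFun hy ⟨i, by simpa [S] using hi⟩
  simpa using LinearMap.finrank_le_finrank_of_injective hg

lemma card_le_card_neg_eigenvalues (f : (ι → ℝ) →ₗ[ℝ] n → ℝ)
    (hf : ∀ y ≠ 0, f y ⬝ᵥ A *ᵥ f y < 0) :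
    Fintype.card ι ≤ #{i | hA.eigenvalues i < 0} := by
  refine hA.card_le_card_filter_eigenvalues (· < 0) f fun y hy => ?_
  by_contra hy0
  refine (hf y hy0).not_ge ?_
  rw [hA.dotProduct_mulVec_eq_sum]
  refine Finset.sum_nonneg fun i _ => ?_
  by_cases hi : hA.eigenvalues i < 0
  · simp [hy i hi]
  · exact mul_nonneg (not_lt.1 hi) (sq_nonneg _)

lemma card_le_card_pos_eigenvalues (f : (ι → ℝ) →ₗ[ℝ] n → ℝ)
    (hf : ∀ y ≠ 0, 0 < f y ⬝ᵥ A *ᵥ f y) :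
    Fintype.card ι ≤ #{i | 0 < hA.eigenvalues i} := by
  refine hA.card_le_card_filter_eigenvalues (0 < ·) f fun y hy => ?_
  by_contra hy0
  refine (hf y hy0).not_ge ?_
  rw [hA.dotProduct_mulVec_eq_sum]
  refine Finset.sum_nonpos fun i _ => ?_
  by_cases hi : 0 < hA.eigenvalues i
  · simp [hy i hi]
  · exact mul_nonpos_of_nonpos_of_nonneg (not_lt.1 hi) (sq_nonneg _)

lemma card_neg_eigenvalues_add_card_pos_eigenvalues_le :
    #{i | hA.eigenvalues i < 0} + #{i | 0 < hA.eigenvalues i} ≤ Fintype.card n := by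
  rw [← card_union_of_disjoint (disjoint_filter.2 fun i _ h => h.asymm)]
  exact card_le_univ _

end Matrix.IsHermitian

section SingularValues

variable {m n : ℕ} (G : Matrix (Fin m) (Fin n) ℝ)

lemma sq_specNorm :
    specNorm G ^ 2 = ⨆ i, (isHermitian_mul_conjTranspose_self G).eigenvalues i :=
  Real.sq_sqrt (Real.iSup_nonneg (eigenvalues_self_mul_conjTranspose_nonneg G))

lemma sq_sigMin :
    sigMin G ^ 2 = ⨅ i, (isHermitian_mul_conjTranspose_self G).eigenvalues i :=
  Real.sq_sqrt (Real.iInf_nonneg (eigenvalues_self_mul_conjTranspose_nonneg G))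

lemma transpose_mulVec_dotProduct_self (w : Fin m → ℝ) :
    Gᵀ *ᵥ w ⬝ᵥ Gᵀ *ᵥ w = w ⬝ᵥ (G * Gᴴ) *ᵥ w := by
  rw [dotProduct_transpose_mulVec, mulVec_mulVec, conjTranspose_eq_transpose_of_trivial]

lemma transpose_mulVec_dotProduct_self_le (w : Fin m → ℝ) :
    Gᵀ *ᵥ w ⬝ᵥ Gᵀ *ᵥ w ≤ specNorm G ^ 2 * (w ⬝ᵥ w) := by
  rw [transpose_mulVec_dotProduct_self, sq_specNorm]
  exact (isHermitian_mul_conjTranspose_self G).dotProduct_mulVec_le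
    (fun i => le_ciSup (Set.finite_range _).bddAbove i) w

lemma sigMin_sq_mul_le_transpose_mulVec_dotProduct_self (w : Fin m → ℝ) :
    sigMin G ^ 2 * (w ⬝ᵥ w) ≤ Gᵀ *ᵥ w ⬝ᵥ Gᵀ *ᵥ w := by
  rw [transpose_mulVec_dotProduct_self, sq_sigMin]
  exact (isHermitian_mul_conjTranspose_self G).le_dotProduct_mulVec
    (fun i => ciInf_le (Set.finite_range _).bddBelow i) w

lemma mulVec_dotProduct_self_le (u : Fin n → ℝ) :
    G *ᵥ u ⬝ᵥ G *ᵥ u ≤ specNorm G ^ 2 * (u ⬝ᵥ u) :=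
  mulVec_dotProduct_le_of_transpose (sq_nonneg _) (transpose_mulVec_dotProduct_self_le G) u

end SingularValues

-- `M̄` of the paper, with `H̄ = H` and `D* = diagonal e`.
def augmentedMatrix {ι κ : Type*} [DecidableEq κ] (H : Matrix ι ι ℝ) (G : Matrix κ ι ℝ)
    (e : κ → ℝ) : Matrix (ι ⊕ κ) (ι ⊕ κ) ℝ :=
  fromBlocks (-H) Gᵀ G (diagonal e)

namespace augmentedMatrix

variable {ι κ : Type*} [Fintype ι] [Fintype κ] [DecidableEq κ]
  {G : Matrix κ ι ℝ} {H : Matrix ι ι ℝ} {e : κ → ℝ} {μ : ℝ} {u : ι → ℝ} {v : κ → ℝ}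

lemma eigen_equations (hx : augmentedMatrix H G e *ᵥ Sum.elim u v = μ • Sum.elim u v) :
    Gᵀ *ᵥ v = μ • u + H *ᵥ u ∧ ∀ j, (G *ᵥ u) j = (μ - e j) * v j := by
  rw [augmentedMatrix, fromBlocks_mulVec] at hx
  refine ⟨funext fun i => ?_, fun j => ?_⟩
  · have := congrFun hx (Sum.inl i)
    simp only [Sum.elim_inl, Sum.elim_comp_inl, Sum.elim_comp_inr, Pi.add_apply, neg_mulVec,
      Pi.neg_apply, Pi.smul_apply] at this ⊢
    linarith
  · have := congrFun hx (Sum.inr j)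
    simp only [Sum.elim_inr, Sum.elim_comp_inl, Sum.elim_comp_inr, Pi.add_apply, mulVec_diagonal,
      Pi.smul_apply, smul_eq_mul] at this
    linarith

lemma dotProduct_transpose_mulVec_eq
    (hx : augmentedMatrix H G e *ᵥ Sum.elim u v = μ • Sum.elim u v) :
    u ⬝ᵥ Gᵀ *ᵥ v = μ * (u ⬝ᵥ u) + u ⬝ᵥ H *ᵥ u := by
  rw [(eigen_equations hx).1, dotProduct_add, dotProduct_smul, smul_eq_mul]

lemma dotProduct_transpose_mulVec_eq_sum
    (hx : augmentedMatrix H G e *ᵥ Sum.elim u v = μ • Sum.elim u v) :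
    u ⬝ᵥ Gᵀ *ᵥ v = ∑ j, (μ - e j) * v j ^ 2 := by
  rw [dotProduct_transpose_mulVec]
  exact Finset.sum_congr rfl fun j _ => by rw [(eigen_equations hx).2 j]; ring

lemma left_ne_zero_of_forall_ne (hμ : ∀ j, μ ≠ e j) (hne : Sum.elim u v ≠ 0)
    (hx : augmentedMatrix H G e *ᵥ Sum.elim u v = μ • Sum.elim u v) : u ≠ 0 := by
  rintro rfl
  refine hne (funext fun j => ?_)
  rcases j with i | j
  · rfl
  · have h := (eigen_equations hx).2 j
    rw [mulVec_zero, Pi.zero_apply, eq_comm, mul_eq_zero] at h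
    exact h.resolve_left (sub_ne_zero.2 (hμ j))

variable [DecidableEq ι]

lemma right_ne_zero_of_pos (hH : H.IsHermitian) (hHnn : ∀ i, 0 ≤ hH.eigenvalues i) (hμ : 0 < μ)
    (hne : Sum.elim u v ≠ 0)
    (hx : augmentedMatrix H G e *ᵥ Sum.elim u v = μ • Sum.elim u v) : v ≠ 0 := by
  rintro rfl
  have hu : u = 0 := by
    have h := dotProduct_transpose_mulVec_eq hx
    rw [mulVec_zero, dotProduct_zero] at h
    have := hH.le_dotProduct_mulVec hHnn u
    have := dotProduct_self_nonneg_s19 u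
    exact dotProduct_self_eq_zero.1 (by nlinarith)
  exact hne (by rw [hu]; exact Sum.elim_zero_zero)

lemma neg_eigenvalue_le (hH : H.IsHermitian) {l : ℝ} (hl : ∀ i, l ≤ hH.eigenvalues i)
    (hμ : ∀ j, μ ≤ e j) (hu : u ≠ 0)
    (hx : augmentedMatrix H G e *ᵥ Sum.elim u v = μ • Sum.elim u v) : μ ≤ -l := by
  have hcoupling : u ⬝ᵥ Gᵀ *ᵥ v ≤ 0 := by
    rw [dotProduct_transpose_mulVec_eq_sum hx]
    exact Finset.sum_nonpos fun j _ => mul_nonpos_of_nonpos_of_nonneg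
      (sub_nonpos.2 (hμ j)) (sq_nonneg _)
  have := hH.le_dotProduct_mulVec hl u
  have := dotProduct_transpose_mulVec_eq hx
  nlinarith [dotProduct_self_pos_s19 hu]

lemma neg_eigenvalue_quadratic_le (hH : H.IsHermitian) {L d c : ℝ}
    (hL : ∀ i, hH.eigenvalues i ≤ L) (hd : ∀ j, d ≤ e j)
    (hG : ∀ u, G *ᵥ u ⬝ᵥ G *ᵥ u ≤ c * (u ⬝ᵥ u)) (hμ : μ ≤ d) (hu : u ≠ 0)
    (hx : augmentedMatrix H G e *ᵥ Sum.elim u v = μ • Sum.elim u v) :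
    (μ + L) * (μ - d) ≤ c := by
  have hGu : G *ᵥ u ⬝ᵥ G *ᵥ u = ∑ j, ((e j - μ) * v j) ^ 2 :=
    Finset.sum_congr rfl fun j _ => by rw [(eigen_equations hx).2 j]; ring
  have hcoupling : u ⬝ᵥ Gᵀ *ᵥ v = -∑ j, (e j - μ) * v j ^ 2 := by
    rw [dotProduct_transpose_mulVec_eq_sum hx, ← Finset.sum_neg_distrib]
    exact Finset.sum_congr rfl fun j _ => by ring
  have hdiag : (d - μ) * ∑ j, (e j - μ) * v j ^ 2 ≤ G *ᵥ u ⬝ᵥ G *ᵥ u :=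
    hGu ▸ mul_sum_le_sum_mul_mul_sq (sub_nonneg.2 hμ) fun j => sub_le_sub_right (hd j) μ
  have hHu := hH.dotProduct_mulVec_le hL u
  have hU := dotProduct_self_pos_s19 hu
  have key : (μ + L) * (μ - d) * (u ⬝ᵥ u) ≤ c * (u ⬝ᵥ u) := by
    have := dotProduct_transpose_mulVec_eq hx
    nlinarith [hG u, mul_le_mul_of_nonneg_left hHu (sub_nonneg.2 hμ)]
  exact le_of_mul_le_mul_right key hU

lemma pos_eigenvalue_quadratic_le (hH : H.IsHermitian) (hHnn : ∀ i, 0 ≤ hH.eigenvalues i)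
    {D c : ℝ} (hD : ∀ j, e j ≤ D) (hc : 0 ≤ c) (hG : ∀ u, G *ᵥ u ⬝ᵥ G *ᵥ u ≤ c * (u ⬝ᵥ u))
    (hμ : 0 < μ) (hne : Sum.elim u v ≠ 0)
    (hx : augmentedMatrix H G e *ᵥ Sum.elim u v = μ • Sum.elim u v) :
    μ * (μ - D) ≤ c := by
  rcases le_or_gt μ D with hle | hlt
  · nlinarith
  have hU := dotProduct_self_pos_s19 <|
    left_ne_zero_of_forall_ne (fun j => ((hD j).trans_lt hlt).ne') hne hx
  have hV := dotProduct_self_pos_s19 (right_ne_zero_of_pos hH hHnn hμ hne hx)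
  have hp₁ : μ * (u ⬝ᵥ u) ≤ u ⬝ᵥ Gᵀ *ᵥ v := by
    rw [dotProduct_transpose_mulVec_eq hx]
    linarith [hH.le_dotProduct_mulVec hHnn u]
  have hp₂ : (μ - D) * (v ⬝ᵥ v) ≤ u ⬝ᵥ Gᵀ *ᵥ v := by
    rw [dotProduct_transpose_mulVec_eq_sum hx]
    simpa only [dotProduct, sq] using
      mul_sum_sq_le_sum_mul_sq (c := v) fun j => sub_le_sub_left (hD j) μ
  have hCS : (u ⬝ᵥ Gᵀ *ᵥ v) ^ 2 ≤ (G *ᵥ u ⬝ᵥ G *ᵥ u) * (v ⬝ᵥ v) := by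
    rw [dotProduct_transpose_mulVec, dotProduct_comm]
    exact dotProduct_sq_le _ _
  have key : μ * (μ - D) * ((u ⬝ᵥ u) * (v ⬝ᵥ v)) ≤ c * ((u ⬝ᵥ u) * (v ⬝ᵥ v)) := by
    calc μ * (μ - D) * ((u ⬝ᵥ u) * (v ⬝ᵥ v))
        = (μ * (u ⬝ᵥ u)) * ((μ - D) * (v ⬝ᵥ v)) := by ring
      _ ≤ (u ⬝ᵥ Gᵀ *ᵥ v) ^ 2 := by
        rw [sq]
        exact mul_le_mul hp₁ hp₂ (by nlinarith) (by nlinarith)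
      _ ≤ (G *ᵥ u ⬝ᵥ G *ᵥ u) * (v ⬝ᵥ v) := hCS
      _ ≤ c * (u ⬝ᵥ u) * (v ⬝ᵥ v) := mul_le_mul_of_nonneg_right (hG u) hV.le
      _ = c * ((u ⬝ᵥ u) * (v ⬝ᵥ v)) := by ring
  exact le_of_mul_le_mul_right key (mul_pos hU hV)

lemma quadratic_le_pos_eigenvalue (hH : H.IsHermitian) (hHnn : ∀ i, 0 ≤ hH.eigenvalues i)
    {L d s : ℝ} (hL : ∀ i, hH.eigenvalues i ≤ L) (hL0 : 0 ≤ L) (hd : ∀ j, d ≤ e j)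
    (hG : ∀ w, s * (w ⬝ᵥ w) ≤ Gᵀ *ᵥ w ⬝ᵥ Gᵀ *ᵥ w) (hμ : 0 < μ) (hne : Sum.elim u v ≠ 0)
    (hx : augmentedMatrix H G e *ᵥ Sum.elim u v = μ • Sum.elim u v) :
    s ≤ (μ + L) * (μ - d) := by
  have hV := dotProduct_self_pos_s19 (right_ne_zero_of_pos hH hHnn hμ hne hx)
  have hw : Gᵀ *ᵥ v = μ • u + H *ᵥ u := (eigen_equations hx).1
  have h₁ : Gᵀ *ᵥ v ⬝ᵥ Gᵀ *ᵥ v ≤ (μ + L) * (u ⬝ᵥ Gᵀ *ᵥ v) := by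
    rw [hw]
    exact hH.dotProduct_self_smul_add_mulVec_le (fun i => by linarith [hHnn i])
      (fun i => by linarith [hL i]) u
  have h₂ : u ⬝ᵥ Gᵀ *ᵥ v ≤ (μ - d) * (v ⬝ᵥ v) := by
    rw [dotProduct_transpose_mulVec_eq_sum hx]
    simpa only [dotProduct, sq] using
      sum_mul_sq_le_mul_sum_sq (c := v) fun j => sub_le_sub_left (hd j) μ
  have key : s * (v ⬝ᵥ v) ≤ (μ + L) * (μ - d) * (v ⬝ᵥ v) := by
    calc s * (v ⬝ᵥ v) ≤ Gᵀ *ᵥ v ⬝ᵥ Gᵀ *ᵥ v := hG v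
      _ ≤ (μ + L) * (u ⬝ᵥ Gᵀ *ᵥ v) := h₁
      _ ≤ (μ + L) * ((μ - d) * (v ⬝ᵥ v)) := mul_le_mul_of_nonneg_left h₂ (by linarith)
      _ = (μ + L) * (μ - d) * (v ⬝ᵥ v) := by ring
  exact le_of_mul_le_mul_right key hV

open Finset

lemma card_left_le_card_neg_eigenvalues (hH : H.PosDef)
    (hM : (augmentedMatrix H G e).IsHermitian) :
    Fintype.card ι ≤ #{i | hM.eigenvalues i < 0} := by
  refine hM.card_le_card_neg_eigenvalues (fromRows (1 : Matrix ι ι ℝ) 0).mulVecLin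
    fun y hy => ?_
  simp only [augmentedMatrix, mulVecLin_apply, fromRows_mulVec, one_mulVec, zero_mulVec,
    sumElim_dotProduct_fromBlocks_mulVec, neg_mulVec, dotProduct_neg, mulVec_zero,
    dotProduct_zero, zero_dotProduct, add_zero]
  exact neg_neg_of_pos (hH.real_dotProduct_mulVec_pos hy)

lemma card_right_le_card_pos_eigenvalues (hH : H.PosDef) (he : ∀ j, 0 < e j)
    (hM : (augmentedMatrix H G e).IsHermitian) :
    Fintype.card κ ≤ #{i | 0 < hM.eigenvalues i} := by
  refine hM.card_le_card_pos_eigenvalues (fromRows (H⁻¹ * Gᵀ) 1).mulVecLin fun y hy => ?_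
  simp only [mulVecLin_apply, fromRows_mulVec, one_mulVec, ← mulVec_mulVec]
  set u := H⁻¹ *ᵥ Gᵀ *ᵥ y
  have hHu : H *ᵥ u = Gᵀ *ᵥ y := by
    rw [mulVec_mulVec, mul_nonsing_inv _ (isUnit_iff_ne_zero.2 hH.det_pos.ne'), one_mulVec]
  have hGu : y ⬝ᵥ G *ᵥ u = u ⬝ᵥ H *ᵥ u := by rw [hHu, dotProduct_transpose_mulVec]
  rw [augmentedMatrix, sumElim_dotProduct_fromBlocks_mulVec, neg_mulVec, dotProduct_neg, ← hHu,
    hGu]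
  have hHu0 : 0 ≤ u ⬝ᵥ H *ᵥ u := by simpa using hH.posSemidef.dotProduct_mulVec_nonneg u
  linarith [(PosDef.diagonal he).real_dotProduct_mulVec_pos hy]

theorem card_eigenvalues (hH : H.PosDef)
    (he : ∀ j, 0 < e j) (hM : (augmentedMatrix H G e).IsHermitian) :
    #{i | hM.eigenvalues i < 0} = Fintype.card ι ∧
      #{i | 0 < hM.eigenvalues i} = Fintype.card κ := by
  have hneg := card_left_le_card_neg_eigenvalues hH hM
  have hpos := card_right_le_card_pos_eigenvalues hH he hM
  have htotal := hM.card_neg_eigenvalues_add_card_pos_eigenvalues_le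
  rw [Fintype.card_sum] at htotal
  omega

end augmentedMatrix

theorem stmt_19_general {m n₂ : ℕ} (G : Matrix (Fin m) (Fin n₂) ℝ)
    (H : Matrix (Fin n₂) (Fin n₂) ℝ) (hH : H.PosDef)
    (e : Fin m → ℝ) (he : ∀ i, 0 < e i)
    (M : Matrix (Fin n₂ ⊕ Fin m) (Fin n₂ ⊕ Fin m) ℝ)
    (hMdef : M = Matrix.fromBlocks (-H) Gᵀ G (Matrix.diagonal e))
    (hM : M.IsHermitian) :
    (Finset.univ.filter fun i => hM.eigenvalues i < 0).card = n₂ ∧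
    (Finset.univ.filter fun i => 0 < hM.eigenvalues i).card = m ∧
    (∀ μ : ℝ, μ < 0 →
      ∀ x : Fin n₂ ⊕ Fin m → ℝ, x ≠ 0 → M.mulVec x = μ • x →
      (μ ≤ -(⨅ i, hH.1.eigenvalues i)) ∧
      ((1 / 2) * (((⨅ j, e j) - ⨆ i, hH.1.eigenvalues i) -
        Real.sqrt (((⨆ i, hH.1.eigenvalues i) + ⨅ j, e j) ^ 2 +
          4 * specNorm G ^ 2)) ≤ μ)) ∧
    (∀ μ : ℝ, 0 < μ →
      ∀ x : Fin n₂ ⊕ Fin m → ℝ, x ≠ 0 → M.mulVec x = μ • x →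
      (μ ≤ (1 / 2) * ((⨆ j, e j) +
        Real.sqrt ((⨆ j, e j) ^ 2 + 4 * specNorm G ^ 2))) ∧
      ((1 / 2) * (((⨅ j, e j) - ⨆ i, hH.1.eigenvalues i) +
        Real.sqrt (((⨆ i, hH.1.eigenvalues i) + ⨅ j, e j) ^ 2 +
          4 * sigMin G ^ 2)) ≤ μ)) := by
  subst hMdef
  have hHnn i : 0 ≤ hH.1.eigenvalues i := (hH.eigenvalues_pos i).le
  have hl i : (⨅ i, hH.1.eigenvalues i) ≤ hH.1.eigenvalues i :=
    ciInf_le (Set.finite_range _).bddBelow i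
  have hL i : hH.1.eigenvalues i ≤ ⨆ i, hH.1.eigenvalues i :=
    le_ciSup (Set.finite_range _).bddAbove i
  have hd j : (⨅ j, e j) ≤ e j := ciInf_le (Set.finite_range _).bddBelow j
  have hD j : e j ≤ ⨆ j, e j := le_ciSup (Set.finite_range _).bddAbove j
  obtain ⟨hneg, hpos⟩ := augmentedMatrix.card_eigenvalues hH he hM
  refine ⟨hneg.trans (Fintype.card_fin n₂), hpos.trans (Fintype.card_fin m),
    fun μ hμ x hx hxμ => ?_, fun μ hμ x hx hxμ => ?_⟩
  all_goals
    obtain ⟨u, v, rfl⟩ : ∃ u v, x = Sum.elim u v := ⟨_, _, (Sum.elim_comp_inl_inr x).symm⟩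
  · have hμe j : μ < e j := hμ.trans (he j)
    have hu := augmentedMatrix.left_ne_zero_of_forall_ne (fun j => (hμe j).ne) hx hxμ
    have hquad := augmentedMatrix.neg_eigenvalue_quadratic_le hH.1 hL hd
      (mulVec_dotProduct_self_le G) (hμ.le.trans (Real.iInf_nonneg fun j => (he j).le)) hu hxμ
    have := (abs_le.1 (abs_two_mul_add_sub_le_sqrt hquad)).1
    exact ⟨augmentedMatrix.neg_eigenvalue_le hH.1 hl (fun j => (hμe j).le) hu hxμ, by linarith⟩
  · have hquad := augmentedMatrix.pos_eigenvalue_quadratic_le hH.1 hHnn hD (sq_nonneg _)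
      (mulVec_dotProduct_self_le G) hμ hx hxμ
    have hupper := (abs_le.1 (abs_two_mul_add_sub_le_sqrt (a := 0) (by simpa using hquad))).2
    have hlower := sqrt_le_two_mul_add_sub (sq_nonneg _) (by linarith [Real.iSup_nonneg hHnn])
      (augmentedMatrix.quadratic_le_pos_eigenvalue hH.1 hHnn hL (Real.iSup_nonneg hHnn) hd
        (sigMin_sq_mul_le_transpose_mulVec_dotProduct_self G) hμ hx hxμ)
    rw [zero_add] at hupper
    constructor <;> linarith

/-- Theorem 3.4 of the paper: with `H̄` symmetric positive definite and `D*` diagonal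
positive, `M̄ = [[−H̄, Gᵀ],[G, D*]]` has exactly `n₂` negative and `m` positive
eigenvalues, every negative eigenvalue `μ̄` satisfies
`μ̄ ≤ −λ_min(H̄)` and
`μ̄ ≥ ½((min_j D*_jj − λ_max(H̄)) − √((λ_max(H̄) + min_j D*_jj)² + 4σ_max(G)²))`,
and every positive eigenvalue `μ̄` satisfies
`μ̄ ≤ ½(max_j D*_jj + √((max_j D*_jj)² + 4σ_max(G)²))` and
`μ̄ ≥ ½((min_j D*_jj − λ_max(H̄)) + √((λ_max(H̄) + min_j D*_jj)² + 4σ_min(G)²))`. -/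
theorem stmt_19 {m n₂ : ℕ} (hmn : m ≤ n₂) (G : Matrix (Fin m) (Fin n₂) ℝ)
    (H : Matrix (Fin n₂) (Fin n₂) ℝ) (hH : H.PosDef)
    (e : Fin m → ℝ) (he : ∀ i, 0 < e i)
    (M : Matrix (Fin n₂ ⊕ Fin m) (Fin n₂ ⊕ Fin m) ℝ)
    (hMdef : M = Matrix.fromBlocks (-H) Gᵀ G (Matrix.diagonal e))
    (hM : M.IsHermitian) :
    (Finset.univ.filter fun i => hM.eigenvalues i < 0).card = n₂ ∧
    (Finset.univ.filter fun i => 0 < hM.eigenvalues i).card = m ∧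
    (∀ μ : ℝ, μ < 0 →
      ∀ x : Fin n₂ ⊕ Fin m → ℝ, x ≠ 0 → M.mulVec x = μ • x →
      (μ ≤ -(⨅ i, hH.1.eigenvalues i)) ∧
      ((1 / 2) * (((⨅ j, e j) - ⨆ i, hH.1.eigenvalues i) -
        Real.sqrt (((⨆ i, hH.1.eigenvalues i) + ⨅ j, e j) ^ 2 +
          4 * specNorm G ^ 2)) ≤ μ)) ∧
    (∀ μ : ℝ, 0 < μ →
      ∀ x : Fin n₂ ⊕ Fin m → ℝ, x ≠ 0 → M.mulVec x = μ • x →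
      (μ ≤ (1 / 2) * ((⨆ j, e j) +
        Real.sqrt ((⨆ j, e j) ^ 2 + 4 * specNorm G ^ 2))) ∧
      ((1 / 2) * (((⨅ j, e j) - ⨆ i, hH.1.eigenvalues i) +
        Real.sqrt (((⨆ i, hH.1.eigenvalues i) + ⨅ j, e j) ^ 2 +
          4 * sigMin G ^ 2)) ≤ μ)) :=
  stmt_19_general G H hH e he M hMdef hM
end
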